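/- Let U, V be matrices with orthonormal columns such that U U* + V V* = I, and let Û, V̂ be matrices of the same respective sizes satisfying Û Û* + V̂ V̂* = I. Suppose ‖U* V̂‖ ≤ 1/2 and ‖Û* S (V̂* S)^{-1}‖ ≤ γ for some γ ≤ 1 (with V̂* S and V* S invertible). Then ‖U* S (V* S)^{-1}‖ ≤ (2 + 4γ)/(3 − 2γ). -/

import Mathlib

open MeasureTheory ProbabilityTheory Matrix Real

noncomputable section

set_option linter.unusedVariables false
set_option maxHeartbeats 1000000

instance matMS {m n : ℕ} : MeasurableSpace (Matrix (Fin m) (Fin n) ℝ) :=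
  MeasurableSpace.pi

/-- Spectral norm (ℓ₂ operator norm) of a real matrix. -/
def specNorm {m n : ℕ} (X : Matrix (Fin m) (Fin n) ℝ) : ℝ :=
  ‖LinearMap.toContinuousLinearMap (Matrix.toEuclideanLin X)‖

/-- Frobenius norm of a real matrix. -/
def frobNorm {m n : ℕ} (X : Matrix (Fin m) (Fin n) ℝ) : ℝ :=
  Real.sqrt (∑ i, ∑ j, (X i j) ^ 2)

/-- Schatten `p`-norm of a real matrix: the `ℓ_p` norm of its singular values. -/
def schattenNorm (p : ℝ) {m n : ℕ} (X : Matrix (Fin m) (Fin n) ℝ) : ℝ :=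
  (∑ i, Real.sqrt ((Matrix.isHermitian_conjTranspose_mul_self X).eigenvalues i) ^ p) ^ (1 / p)

/-- `L_{p,p}` norm of a random matrix: `(𝔼 ‖X‖_p^p)^{1/p}`. -/
def Lpp {Ω : Type*} [MeasurableSpace Ω] (μ : Measure Ω) (p : ℝ) {m n : ℕ}
    (X : Ω → Matrix (Fin m) (Fin n) ℝ) : ℝ :=
  (∫ ω, schattenNorm p (X ω) ^ p ∂μ) ^ (1 / p)

/-- Ky Fan `(2,k)` norm: the supremum over `d × k` matrices `P` with orthonormal
columns of `‖Pᵀ X‖_F`. -/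
def kyFan2k {d : ℕ} (k : ℕ) (X : Matrix (Fin d) (Fin d) ℝ) : ℝ :=
  sSup {c : ℝ | ∃ P : Matrix (Fin d) (Fin k) ℝ, Pᵀ * P = 1 ∧ c = frobNorm (Pᵀ * X)}

/-!
Put `P = Uhᵀ S (Vhᵀ S)⁻¹`, so that `T = S (Vhᵀ S)⁻¹ = Uh P + Vh`, and
`Uᵀ S (Vᵀ S)⁻¹ = (Uᵀ T) (Vᵀ T)⁻¹`. Because `U Uᵀ + V Vᵀ = 1`, Pythagoras gives
`‖Vᵀ Vh y‖² = ‖y‖² - ‖Uᵀ Vh y‖² ≥ 3/4 ‖y‖²`; a square matrix and its transpose have the same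
smallest singular value, so the same bound holds for `Vhᵀ V`, and Pythagoras again yields
`‖Vᵀ Uh‖ ≤ 1/2`. Hence `‖Uᵀ T‖ ≤ γ + 1/2`, while `‖Vᵀ T y‖ ≥ (3/4 - γ/2) ‖y‖` (using
`√3/2 ≥ 3/4`), and the quotient of these two bounds is `(2 + 4γ)/(3 - 2γ)`.
-/

open scoped RealInnerProductSpace Matrix.Norms.L2Operator

namespace Matrix

section EuclideanAction

variable {l m n : Type*} [Fintype m] [Fintype n] [DecidableEq m] [DecidableEq n]

lemma toEuclideanLin_mul_apply (A : Matrix l m ℝ) (B : Matrix m n ℝ) (x : EuclideanSpace ℝ n) :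
    toEuclideanLin (A * B) x = toEuclideanLin A (toEuclideanLin B x) := by
  simp

lemma inner_toEuclideanLin_left (A : Matrix m n ℝ) (x : EuclideanSpace ℝ n)
    (y : EuclideanSpace ℝ m) : ⟪toEuclideanLin A x, y⟫ = ⟪x, toEuclideanLin Aᵀ y⟫ := by
  rw [← conjTranspose_eq_transpose_of_trivial, toEuclideanLin_conjTranspose_eq_adjoint,
    LinearMap.adjoint_inner_right]

lemma norm_toEuclideanLin_sq (A : Matrix m n ℝ) (x : EuclideanSpace ℝ n) :
    ‖toEuclideanLin A x‖ ^ 2 = ⟪x, toEuclideanLin (Aᵀ * A) x⟫ := by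
  rw [← real_inner_self_eq_norm_sq, inner_toEuclideanLin_left, toEuclideanLin_mul_apply]

lemma norm_toEuclideanLin_of_transpose_mul_self {A : Matrix m n ℝ}
    (hA : Aᵀ * A = 1) (x : EuclideanSpace ℝ n) : ‖toEuclideanLin A x‖ = ‖x‖ := by
  rw [← sq_eq_sq₀ (norm_nonneg _) (norm_nonneg _), norm_toEuclideanLin_sq, hA,
    toLpLin_one, LinearMap.id_apply, real_inner_self_eq_norm_sq]

lemma norm_sq_add_norm_sq_of_mul_transpose_add [Fintype l] [DecidableEq l] {A : Matrix m n ℝ}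
    {B : Matrix m l ℝ} (h : A * Aᵀ + B * Bᵀ = 1) (z : EuclideanSpace ℝ m) :
    ‖toEuclideanLin Aᵀ z‖ ^ 2 + ‖toEuclideanLin Bᵀ z‖ ^ 2 = ‖z‖ ^ 2 := by
  rw [norm_toEuclideanLin_sq, norm_toEuclideanLin_sq, transpose_transpose, transpose_transpose,
    ← inner_add_right, ← LinearMap.add_apply, ← map_add, h, toLpLin_one, LinearMap.id_apply,
    real_inner_self_eq_norm_sq]

lemma le_norm_toEuclideanLin_transpose_sq {M : Matrix n n ℝ} {c : ℝ}
    (h : ∀ x, c * ‖x‖ ^ 2 ≤ ‖toEuclideanLin M x‖ ^ 2) (p : EuclideanSpace ℝ n) :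
    c * ‖p‖ ^ 2 ≤ ‖toEuclideanLin Mᵀ p‖ ^ 2 := by
  rcases le_or_gt c 0 with hc | hc
  · exact (mul_nonpos_of_nonpos_of_nonneg hc (sq_nonneg _)).trans (sq_nonneg _)
  have hinj : Function.Injective (toEuclideanLin M) := by
    refine (injective_iff_map_eq_zero _).mpr fun x hx => norm_eq_zero.mp ?_
    have := h x
    rw [hx, norm_zero] at this
    exact pow_eq_zero_iff two_ne_zero |>.mp <| le_antisymm (by nlinarith) (sq_nonneg _)
  obtain ⟨x, rfl⟩ := LinearMap.injective_iff_surjective.mp hinj p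
  have hcs : ‖toEuclideanLin M x‖ ^ 2 ≤ ‖x‖ * ‖toEuclideanLin Mᵀ (toEuclideanLin M x)‖ := by
    rw [← real_inner_self_eq_norm_sq, inner_toEuclideanLin_left]
    exact real_inner_le_norm _ _
  have hxr : c * ‖x‖ ≤ ‖toEuclideanLin Mᵀ (toEuclideanLin M x)‖ := by
    rcases (norm_nonneg x).eq_or_lt with hx | hx
    · rw [← hx, mul_zero]
      exact norm_nonneg _
    · exact le_of_mul_le_mul_left (by nlinarith [h x]) hx
  nlinarith [mul_le_mul_of_nonneg_left hcs hc.le, mul_le_mul_of_nonneg_right hxr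
    (norm_nonneg (toEuclideanLin Mᵀ (toEuclideanLin M x)))]

end EuclideanAction

lemma eq_mul_add_mul_of_mul_transpose_add {R l m n o : Type*} [Semiring R] [Fintype l] [Fintype n]
    [Fintype m] [DecidableEq m] {A : Matrix m n R} {B : Matrix m l R} (h : A * Aᵀ + B * Bᵀ = 1)
    (X : Matrix m o R) : X = A * (Aᵀ * X) + B * (Bᵀ * X) := by
  rw [← Matrix.mul_assoc, ← Matrix.mul_assoc, ← Matrix.add_mul, h, Matrix.one_mul]

end Matrix

section SpecNorm

variable {l m n : ℕ}

lemma specNorm_eq_l2_opNorm (X : Matrix (Fin m) (Fin n) ℝ) : specNorm X = ‖X‖ := rfl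

lemma specNorm_nonneg (X : Matrix (Fin m) (Fin n) ℝ) : 0 ≤ specNorm X := norm_nonneg X

lemma specNorm_transpose (X : Matrix (Fin m) (Fin n) ℝ) : specNorm Xᵀ = specNorm X := by
  rw [specNorm_eq_l2_opNorm, ← conjTranspose_eq_transpose_of_trivial, l2_opNorm_conjTranspose]
  rfl

lemma specNorm_add_le (X Y : Matrix (Fin m) (Fin n) ℝ) :
    specNorm (X + Y) ≤ specNorm X + specNorm Y := norm_add_le X Y

lemma specNorm_mul_le (X : Matrix (Fin l) (Fin m) ℝ) (Y : Matrix (Fin m) (Fin n) ℝ) :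
    specNorm (X * Y) ≤ specNorm X * specNorm Y := l2_opNorm_mul X Y

lemma norm_toEuclideanLin_le (X : Matrix (Fin m) (Fin n) ℝ) (x : EuclideanSpace ℝ (Fin n)) :
    ‖toEuclideanLin X x‖ ≤ specNorm X * ‖x‖ :=
  (LinearMap.toContinuousLinearMap (toEuclideanLin X)).le_opNorm x

lemma specNorm_le_of_forall {X : Matrix (Fin m) (Fin n) ℝ} {c : ℝ} (hc : 0 ≤ c)
    (h : ∀ x, ‖toEuclideanLin X x‖ ≤ c * ‖x‖) : specNorm X ≤ c :=
  ContinuousLinearMap.opNorm_le_bound _ hc h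

end SpecNorm

lemma sub_specNorm_mul_le_norm_toEuclideanLin_add {m n : ℕ} (X Y : Matrix (Fin m) (Fin n) ℝ)
    (y : EuclideanSpace ℝ (Fin n)) :
    ‖toEuclideanLin X y‖ - specNorm Y * ‖y‖ ≤ ‖toEuclideanLin (X + Y) y‖ := by
  have := norm_sub_le (toEuclideanLin X y + toEuclideanLin Y y) (toEuclideanLin Y y)
  rw [add_sub_cancel_right] at this
  rw [map_add, LinearMap.add_apply]
  linarith [norm_toEuclideanLin_le Y y]

section Complements

variable {d j k l : ℕ} {U Uh : Matrix (Fin d) (Fin j) ℝ} {V Vh : Matrix (Fin d) (Fin k) ℝ}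

lemma specNorm_le_one_of_mul_transpose_add (hUV : U * Uᵀ + V * Vᵀ = 1) : specNorm U ≤ 1 := by
  rw [← specNorm_transpose]
  refine specNorm_le_of_forall zero_le_one fun z => ?_
  have := norm_sq_add_norm_sq_of_mul_transpose_add hUV z
  rw [one_mul, ← pow_le_pow_iff_left₀ (norm_nonneg _) (norm_nonneg _) two_ne_zero]
  nlinarith [sq_nonneg ‖toEuclideanLin Vᵀ z‖]

lemma norm_sq_transpose_mul_add (hUV : U * Uᵀ + V * Vᵀ = 1) {W : Matrix (Fin d) (Fin l) ℝ}
    (hW : Wᵀ * W = 1) (y : EuclideanSpace ℝ (Fin l)) :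
    ‖toEuclideanLin (Uᵀ * W) y‖ ^ 2 + ‖toEuclideanLin (Vᵀ * W) y‖ ^ 2 = ‖y‖ ^ 2 := by
  rw [toEuclideanLin_mul_apply, toEuclideanLin_mul_apply,
    norm_sq_add_norm_sq_of_mul_transpose_add hUV, norm_toEuclideanLin_of_transpose_mul_self hW]

lemma one_sub_sq_mul_norm_sq_le (hUV : U * Uᵀ + V * Vᵀ = 1) {W : Matrix (Fin d) (Fin l) ℝ}
    (hW : Wᵀ * W = 1) {s : ℝ} (h : specNorm (Uᵀ * W) ≤ s) (y : EuclideanSpace ℝ (Fin l)) :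
    (1 - s ^ 2) * ‖y‖ ^ 2 ≤ ‖toEuclideanLin (Vᵀ * W) y‖ ^ 2 := by
  have hUW : ‖toEuclideanLin (Uᵀ * W) y‖ ^ 2 ≤ (s * ‖y‖) ^ 2 :=
    pow_le_pow_left₀ (norm_nonneg _)
      ((norm_toEuclideanLin_le _ y).trans (mul_le_mul_of_nonneg_right h (norm_nonneg y))) 2
  linarith [norm_sq_transpose_mul_add hUV hW y]

/-- The sine of the largest principal angle between `range V` and `range Vh` is symmetric. -/
lemma specNorm_transpose_mul_le_of_complements (hUV : U * Uᵀ + V * Vᵀ = 1) (hV : Vᵀ * V = 1)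
    (hUVh : Uh * Uhᵀ + Vh * Vhᵀ = 1) (hVh : Vhᵀ * Vh = 1) {s : ℝ}
    (h : specNorm (Uᵀ * Vh) ≤ s) : specNorm (Vᵀ * Uh) ≤ s := by
  have hs : 0 ≤ s := (specNorm_nonneg _).trans h
  have hVhV : ∀ p, (1 - s ^ 2) * ‖p‖ ^ 2 ≤ ‖toEuclideanLin (Vhᵀ * V) p‖ ^ 2 := by
    simpa only [transpose_mul, transpose_transpose] using
      le_norm_toEuclideanLin_transpose_sq (one_sub_sq_mul_norm_sq_le hUV hVh h)
  rw [← specNorm_transpose, transpose_mul, transpose_transpose]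
  refine specNorm_le_of_forall hs fun p => ?_
  rw [← pow_le_pow_iff_left₀ (norm_nonneg _) (by positivity) two_ne_zero]
  linarith [norm_sq_transpose_mul_add hUVh hV p, hVhV p]

lemma specNorm_transpose_mul_add_le (hUV : U * Uᵀ + V * Vᵀ = 1)
    (hUVh : Uh * Uhᵀ + Vh * Vhᵀ = 1) (P : Matrix (Fin j) (Fin k) ℝ) :
    specNorm (Uᵀ * (Uh * P + Vh)) ≤ specNorm P + specNorm (Uᵀ * Vh) := by
  have hUUh : specNorm (Uᵀ * Uh) ≤ 1 :=
    calc specNorm (Uᵀ * Uh) ≤ specNorm Uᵀ * specNorm Uh := specNorm_mul_le _ _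
      _ ≤ 1 := by
        rw [specNorm_transpose]
        exact mul_le_one₀ (specNorm_le_one_of_mul_transpose_add hUV) (specNorm_nonneg _)
          (specNorm_le_one_of_mul_transpose_add hUVh)
  calc specNorm (Uᵀ * (Uh * P + Vh))
      ≤ specNorm (Uᵀ * Uh) * specNorm P + specNorm (Uᵀ * Vh) := by
        rw [Matrix.mul_add, ← Matrix.mul_assoc]
        exact (specNorm_add_le _ _).trans (by gcongr; exact specNorm_mul_le _ _)
    _ ≤ specNorm P + specNorm (Uᵀ * Vh) := by
        gcongr
        exact mul_le_of_le_one_left (specNorm_nonneg _) hUUh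

lemma sub_mul_norm_le_norm_transpose_mul_add (hUV : U * Uᵀ + V * Vᵀ = 1) (hV : Vᵀ * V = 1)
    (hUVh : Uh * Uhᵀ + Vh * Vhᵀ = 1) (hVh : Vhᵀ * Vh = 1) {s c : ℝ}
    (h : specNorm (Uᵀ * Vh) ≤ s) (hc : 0 ≤ c) (hcs : c ^ 2 ≤ 1 - s ^ 2)
    (P : Matrix (Fin j) (Fin k) ℝ) (y : EuclideanSpace ℝ (Fin k)) :
    (c - s * specNorm P) * ‖y‖ ≤ ‖toEuclideanLin (Vᵀ * (Uh * P + Vh)) y‖ := by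
  have hVVh : c * ‖y‖ ≤ ‖toEuclideanLin (Vᵀ * Vh) y‖ := by
    rw [← pow_le_pow_iff_left₀ (by positivity) (norm_nonneg _) two_ne_zero, mul_pow]
    nlinarith [one_sub_sq_mul_norm_sq_le hUV hVh h y, sq_nonneg ‖y‖]
  have hVUhP : specNorm (Vᵀ * (Uh * P)) ≤ s * specNorm P := by
    rw [← Matrix.mul_assoc]
    exact (specNorm_mul_le _ _).trans <| mul_le_mul_of_nonneg_right
      (specNorm_transpose_mul_le_of_complements hUV hV hUVh hVh h) (specNorm_nonneg _)
  have := sub_specNorm_mul_le_norm_toEuclideanLin_add (Vᵀ * Vh) (Vᵀ * (Uh * P)) y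
  rw [← Matrix.mul_add, add_comm Vh] at this
  nlinarith [mul_le_mul_of_nonneg_right hVUhP (norm_nonneg y)]

end Complements

lemma specNorm_mul_le_div {m n k : ℕ} {A : Matrix (Fin m) (Fin n) ℝ} {B : Matrix (Fin k) (Fin n) ℝ}
    {C : Matrix (Fin n) (Fin k) ℝ} (hBC : B * C = 1) {a b : ℝ} (hA : specNorm A ≤ a) (hb : 0 < b)
    (hB : ∀ y, b * ‖y‖ ≤ ‖toEuclideanLin B y‖) : specNorm (A * C) ≤ a / b := by
  have ha : 0 ≤ a := (specNorm_nonneg A).trans hA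
  refine specNorm_le_of_forall (by positivity) fun z => ?_
  have hCz : b * ‖toEuclideanLin C z‖ ≤ ‖z‖ := by
    simpa [← toEuclideanLin_mul_apply, hBC] using hB (toEuclideanLin C z)
  rw [toEuclideanLin_mul_apply, div_mul_eq_mul_div, le_div_iff₀ hb]
  calc ‖toEuclideanLin A (toEuclideanLin C z)‖ * b
      ≤ a * ‖toEuclideanLin C z‖ * b := by
        gcongr
        exact (norm_toEuclideanLin_le _ _).trans (by gcongr)
    _ ≤ a * ‖z‖ := by
        rw [mul_assoc, mul_comm _ b]
        gcongr


lemma specNorm_mul_nonsing_inv_le_div {m n k : ℕ} {A : Matrix (Fin m) (Fin n) ℝ}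
    {B : Matrix (Fin k) (Fin n) ℝ} {S : Matrix (Fin n) (Fin k) ℝ} {R : Matrix (Fin k) (Fin k) ℝ}
    (hBS : IsUnit (B * S).det) (hR : IsUnit R.det) {a b : ℝ} (hA : specNorm (A * S * R) ≤ a)
    (hb : 0 < b) (hB : ∀ y, b * ‖y‖ ≤ ‖toEuclideanLin (B * S * R) y‖) :
    specNorm (A * S * (B * S)⁻¹) ≤ a / b := by
  have hcancel : ∀ {p : ℕ} (X : Matrix (Fin p) (Fin n) ℝ),
      X * S * R * (R⁻¹ * (B * S)⁻¹) = X * S * (B * S)⁻¹ := fun X => by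
    rw [Matrix.mul_assoc (X * S) R, ← Matrix.mul_assoc R, mul_nonsing_inv _ hR, Matrix.one_mul]
  rw [← hcancel A]
  exact specNorm_mul_le_div (by rw [hcancel B, mul_nonsing_inv _ hBS]) hA hb hB

theorem stmt_17_general (d k : ℕ)
    (U Uh : Matrix (Fin d) (Fin (d - k)) ℝ) (V Vh : Matrix (Fin d) (Fin k) ℝ)
    (hV : Vᵀ * V = 1) (hUV : U * Uᵀ + V * Vᵀ = 1)
    (hVh : Vhᵀ * Vh = 1) (hUVh : Uh * Uhᵀ + Vh * Vhᵀ = 1)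
    (S : Matrix (Fin d) (Fin k) ℝ)
    (hSV : IsUnit (Vᵀ * S).det) (hSVh : IsUnit (Vhᵀ * S).det)
    (γ : ℝ) (hγ1 : γ ≤ 1)
    (h1 : specNorm (Uᵀ * Vh) ≤ 1 / 2)
    (h2 : specNorm (Uhᵀ * S * (Vhᵀ * S)⁻¹) ≤ γ) :
    specNorm (Uᵀ * S * (Vᵀ * S)⁻¹) ≤ (2 + 4 * γ) / (3 - 2 * γ) := by
  set P := Uhᵀ * S * (Vhᵀ * S)⁻¹
  have hT : S * (Vhᵀ * S)⁻¹ = Uh * P + Vh := by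
    rw [eq_mul_add_mul_of_mul_transpose_add hUVh (S * (Vhᵀ * S)⁻¹), ← Matrix.mul_assoc Vhᵀ,
      mul_nonsing_inv _ hSVh, Matrix.mul_one, ← Matrix.mul_assoc Uhᵀ]
  have hA : specNorm (Uᵀ * S * (Vhᵀ * S)⁻¹) ≤ γ + 1 / 2 := by
    rw [Matrix.mul_assoc, hT]
    linarith [specNorm_transpose_mul_add_le hUV hUVh P]
  have hB : ∀ y, (3 / 4 - γ / 2) * ‖y‖ ≤ ‖toEuclideanLin (Vᵀ * S * (Vhᵀ * S)⁻¹) y‖ := by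
    intro y
    rw [Matrix.mul_assoc, hT]
    refine le_trans ?_ (sub_mul_norm_le_norm_transpose_mul_add hUV hV hUVh hVh h1
      (by norm_num : (0 : ℝ) ≤ 3 / 4) (by norm_num) P y)
    gcongr
    linarith
  refine (specNorm_mul_nonsing_inv_le_div hSV (isUnit_nonsing_inv_det _ hSVh) hA (by linarith)
    hB).trans_eq ?_
  rw [div_eq_div_iff (by linarith) (by linarith)]
  ring

/-- stability of `‖Uᵀ S (Vᵀ S)⁻¹‖` under change of reference frame. -/
theorem stmt_17 (d k : ℕ) (hk : 0 < k) (hkd : k < d)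
    (U Uh : Matrix (Fin d) (Fin (d - k)) ℝ) (V Vh : Matrix (Fin d) (Fin k) ℝ)
    (hV : Vᵀ * V = 1) (hU : Uᵀ * U = 1) (hUV : U * Uᵀ + V * Vᵀ = 1)
    (hVh : Vhᵀ * Vh = 1) (hUh : Uhᵀ * Uh = 1) (hUVh : Uh * Uhᵀ + Vh * Vhᵀ = 1)
    (S : Matrix (Fin d) (Fin k) ℝ)
    (hSV : IsUnit (Vᵀ * S).det) (hSVh : IsUnit (Vhᵀ * S).det)
    (γ : ℝ) (hγ1 : γ ≤ 1)
    (h1 : specNorm (Uᵀ * Vh) ≤ 1 / 2)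
    (h2 : specNorm (Uhᵀ * S * (Vhᵀ * S)⁻¹) ≤ γ) :
    specNorm (Uᵀ * S * (Vᵀ * S)⁻¹) ≤ (2 + 4 * γ) / (3 - 2 * γ) :=
  stmt_17_general d k U Uh V Vh hV hUV hVh hUVh S hSV hSVh γ hγ1 h1 h2
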